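/- arXiv:1007.4935 — 2 statements merged into one kernel-verified Lean document; each statement's English description precedes it below -/
import Mathlib

section
/- For every finite non-empty multiset S of natural numbers there exists an optimal base for the sum-of-digits cost function all of whose elements are prime numbers. That is, for every base B there is a base B' consisting only of primes with sum_digits(S, B') ≤ sum_digits(S, B). -/
/-!
Peeling off the least significant digit gives `digitSum (r :: B) v = v % r + digitSum B (v / r)`.
Splitting a radix `a * b` into the two radices `a, b` replaces the digit
`v % (a * b) = v % a + a * (v / a % b)` by the smaller `v % a + v / a % b`, and leaves the higher
digits unchanged since `v / a / b = v / (a * b)`. Hence replacing every radix by the list of its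
prime factors never increases the digit sum of any number.
-/

/-- The weight of digit position `i` in mixed radix base `B`: product of the first `i` radices. -/
def weight (B : List ℕ) (i : ℕ) : ℕ := (B.take i).prod

/-- The `i`-th digit of `v` in mixed radix base `B` (the most significant digit, at
position `B.length`, is `v / B.prod` and is unbounded). -/
def digit (B : List ℕ) (v i : ℕ) : ℕ :=
  if i < B.length then (v / weight B i) % B.getD i 1 else v / B.prod

/-- The sum of the digits of `v` in base `B`. -/
def digitSum (B : List ℕ) (v : ℕ) : ℕ :=
  ∑ i ∈ Finset.range (B.length + 1), digit B v i

/-- The sum of digits of all elements of the multiset `S` in base `B`. -/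
def sumDigits (S : Multiset ℕ) (B : List ℕ) : ℕ :=
  (S.map (digitSum B)).sum

lemma digit_cons_zero (r : ℕ) (B : List ℕ) (v : ℕ) : digit (r :: B) v 0 = v % r := by
  simp [digit, weight]

lemma digit_cons_succ (r : ℕ) (B : List ℕ) (v i : ℕ) :
    digit (r :: B) v (i + 1) = digit B (v / r) i := by
  by_cases h : i < B.length <;>
    simp [digit, weight, h, Nat.div_div_eq_div_mul, Nat.mul_comm r]

lemma digitSum_cons (r : ℕ) (B : List ℕ) (v : ℕ) :
    digitSum (r :: B) v = v % r + digitSum B (v / r) := by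
  rw [digitSum, List.length_cons, Finset.sum_range_succ', digit_cons_zero, add_comm]
  simp only [digit_cons_succ, digitSum]

lemma mod_add_div_mod_le_mod_mul (v a b : ℕ) : v % a + v / a % b ≤ v % (a * b) := by
  rcases a.eq_zero_or_pos with rfl | ha
  · simp
  · rw [Nat.mod_mul]
    exact Nat.add_le_add_left (Nat.le_mul_of_pos_left _ ha) _

lemma digitSum_cons_cons_le (a b : ℕ) (B : List ℕ) (v : ℕ) :
    digitSum (a :: b :: B) v ≤ digitSum (a * b :: B) v := by
  rw [digitSum_cons, digitSum_cons, digitSum_cons, Nat.div_div_eq_div_mul, ← add_assoc]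
  exact Nat.add_le_add_right (mod_add_div_mod_le_mod_mul v a b) _

lemma digitSum_append_le_cons_prod (l B : List ℕ) (v : ℕ) :
    digitSum (l ++ B) v ≤ digitSum (l.prod :: B) v := by
  induction l generalizing v with
  | nil => simp [digitSum_cons]
  | cons a l ih =>
    calc digitSum (a :: l ++ B) v = v % a + digitSum (l ++ B) (v / a) := digitSum_cons ..
      _ ≤ v % a + digitSum (l.prod :: B) (v / a) := Nat.add_le_add_left (ih _) _
      _ = digitSum (a :: l.prod :: B) v := (digitSum_cons ..).symm
      _ ≤ digitSum ((a :: l).prod :: B) v := digitSum_cons_cons_le ..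

lemma digitSum_flatMap_primeFactorsList_le {B : List ℕ} (hB : ∀ r ∈ B, r ≠ 0) (v : ℕ) :
    digitSum (B.flatMap Nat.primeFactorsList) v ≤ digitSum B v := by
  induction B generalizing v with
  | nil => rfl
  | cons r B ih =>
    have ih' := ih (fun x hx => hB x (List.mem_cons_of_mem r hx))
    calc digitSum ((r :: B).flatMap Nat.primeFactorsList) v
        ≤ digitSum (r.primeFactorsList.prod :: B.flatMap Nat.primeFactorsList) v :=
          digitSum_append_le_cons_prod ..
      _ = v % r + digitSum (B.flatMap Nat.primeFactorsList) (v / r) := by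
          rw [Nat.prod_primeFactorsList (hB r List.mem_cons_self), digitSum_cons]
      _ ≤ digitSum (r :: B) v := by
          rw [digitSum_cons]
          exact Nat.add_le_add_left (ih' _) _

theorem stmt7_general (S : Multiset ℕ) (B : List ℕ) (hB : ∀ x ∈ B, 2 ≤ x) :
    ∃ B' : List ℕ, (∀ p ∈ B', Nat.Prime p) ∧ sumDigits S B' ≤ sumDigits S B := by
  refine ⟨B.flatMap Nat.primeFactorsList, ?_, ?_⟩
  · intro p hp
    obtain ⟨r, -, hpr⟩ := List.mem_flatMap.mp hp
    exact Nat.prime_of_mem_primeFactorsList hpr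
  · exact Multiset.sum_map_le_sum_map _ _ fun v _ =>
      digitSum_flatMap_primeFactorsList_le (fun r hr => by have := hB r hr; omega) v

theorem stmt7 (S : Multiset ℕ) (hS : S ≠ 0) (B : List ℕ) (hB : ∀ x ∈ B, 2 ≤ x) :
    ∃ B' : List ℕ, (∀ p ∈ B', Nat.Prime p) ∧ sumDigits S B' ≤ sumDigits S B :=
  stmt7_general S B hB
end

section
/- The sum_digits cost function satisfies the base-product-equivalence property: if B₁ and B₂ are bases with ∏B₁ = ∏B₂ and ∂cost_S(B₁) + h_S(B₁) ≤ ∂cost_S(B₂) + h_S(B₂), then for every common extension sequence C, sum_digits(S_{(B₁C)}) ≤ sum_digits(S_{(B₂C)}). -/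
/-- The sum of most significant digits of the elements of `S` in base `B`. -/
def msdSum (S : Multiset ℕ) (B : List ℕ) : ℕ := (S.map (fun v => v / B.prod)).sum

/-- Partial cost for the `sum_digits` cost function: `cost_S(B) - Σ msd(S_(B))`. -/
def partialCost (S : Multiset ℕ) (B : List ℕ) : ℕ := sumDigits S B - msdSum S B

/-- Heuristic `h_S(B) = |{x ∈ S : x ≥ ∏B}|`. -/
def heur (S : Multiset ℕ) (B : List ℕ) : ℕ := (S.filter (fun x => B.prod ≤ x)).card

/-- `cost^α_S(B) = ∂cost_S(B) + h_S(B)`. -/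
def costAlpha (S : Multiset ℕ) (B : List ℕ) : ℕ := partialCost S B + heur S B

lemma digit_length (B : List ℕ) (v : ℕ) : digit B v B.length = v / B.prod := by
  simp [digit]

lemma digit_append_of_lt (B C : List ℕ) (v : ℕ) {i : ℕ} (hi : i < B.length) :
    digit (B ++ C) v i = digit B v i := by
  have hi' : i < (B ++ C).length := by simp; omega
  rw [digit, digit, if_pos hi', if_pos hi, weight, weight,
    List.take_append_of_le_length hi.le, List.getD_append _ _ _ _ hi]

lemma digit_append_length_add (B C : List ℕ) (v : ℕ) {j : ℕ} (hj : j ≤ C.length) :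
    digit (B ++ C) v (B.length + j) = digit C (v / B.prod) j := by
  rcases hj.lt_or_eq with hj | rfl
  · have hj' : B.length + j < (B ++ C).length := by simp; omega
    rw [digit, digit, if_pos hj', if_pos hj, weight, weight, List.take_append, List.prod_append,
      List.getD_append_right _ _ _ _ (Nat.le_add_right _ _)]
    simp [Nat.div_div_eq_div_mul, List.take_of_length_le (Nat.le_add_right B.length j)]
  · rw [← List.length_append, digit_length, digit_length, List.prod_append,
      Nat.div_div_eq_div_mul]

lemma digitSum_append (B C : List ℕ) (v : ℕ) :
    digitSum (B ++ C) v + v / B.prod = digitSum B v + digitSum C (v / B.prod) := by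
  have low : ∑ i ∈ Finset.range B.length, digit (B ++ C) v i
      = ∑ i ∈ Finset.range B.length, digit B v i :=
    Finset.sum_congr rfl fun i hi => digit_append_of_lt B C v (Finset.mem_range.mp hi)
  have high : ∑ j ∈ Finset.range (C.length + 1), digit (B ++ C) v (B.length + j)
      = digitSum C (v / B.prod) :=
    Finset.sum_congr rfl fun j hj =>
      digit_append_length_add B C v (Nat.lt_succ_iff.mp (Finset.mem_range.mp hj))
  rw [digitSum, digitSum, List.length_append, Nat.add_assoc, Finset.sum_range_add, low, high,
    Finset.sum_range_succ, digit_length]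
  ac_rfl

lemma div_prod_le_digitSum (B : List ℕ) (v : ℕ) : v / B.prod ≤ digitSum B v := by
  rw [← digit_length]
  exact Finset.single_le_sum (fun i _ => Nat.zero_le _) (Finset.self_mem_range_succ _)

lemma msdSum_le_sumDigits (S : Multiset ℕ) (B : List ℕ) : msdSum S B ≤ sumDigits S B :=
  Multiset.sum_map_le_sum_map _ _ fun v _ => div_prod_le_digitSum B v

lemma sumDigits_append (S : Multiset ℕ) (B C : List ℕ) :
    sumDigits S (B ++ C) = partialCost S B + sumDigits (S.map (· / B.prod)) C := by
  have split : sumDigits S (B ++ C) + msdSum S B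
      = sumDigits S B + sumDigits (S.map (· / B.prod)) C := by
    rw [sumDigits, sumDigits, sumDigits, msdSum, Multiset.map_map, ← Multiset.sum_map_add,
      ← Multiset.sum_map_add]
    exact congrArg _ (Multiset.map_congr rfl fun v _ => digitSum_append B C v)
  have := msdSum_le_sumDigits S B
  rw [partialCost]
  omega

theorem stmt15_general (S : Multiset ℕ) (B₁ B₂ : List ℕ)
    (hprod : B₁.prod = B₂.prod)
    (hcost : costAlpha S B₁ ≤ costAlpha S B₂) :
    ∀ C : List ℕ, (∀ x ∈ C, 2 ≤ x) →
      sumDigits S (B₁ ++ C) ≤ sumDigits S (B₂ ++ C) := by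
  intro C _
  have hheur : heur S B₁ = heur S B₂ := by rw [heur, heur, hprod]
  have hpartial : partialCost S B₁ ≤ partialCost S B₂ := by
    rw [costAlpha, costAlpha, hheur] at hcost
    omega
  rw [sumDigits_append, sumDigits_append, hprod]
  exact Nat.add_le_add_right hpartial _

theorem stmt15 (S : Multiset ℕ) (B₁ B₂ : List ℕ)
    (h₁ : ∀ x ∈ B₁, 2 ≤ x) (h₂ : ∀ x ∈ B₂, 2 ≤ x)
    (hprod : B₁.prod = B₂.prod)
    (hcost : costAlpha S B₁ ≤ costAlpha S B₂) :
    ∀ C : List ℕ, (∀ x ∈ C, 2 ≤ x) →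
      sumDigits S (B₁ ++ C) ≤ sumDigits S (B₂ ++ C) :=
  stmt15_general S B₁ B₂ hprod hcost
end
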